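/- Let ϕ : (0,∞) → (0,∞) be a continuous function. If h_i, h : S^{n-1} → (0,∞) are continuous functions with h_i → h uniformly on S^{n-1}, then Ṽ_ϕ([h_i]) → Ṽ_ϕ([h]) as i → ∞, where [f] denotes the Wulff shape of f. -/

import Mathlib

open MeasureTheory Metric Set Filter
open scoped ENNReal NNReal Topology RealInnerProductSpace

noncomputable section

/-- The unit sphere `S^{n-1}` in `ℝⁿ`. -/
def unitSphere (n : ℕ) : Set (EuclideanSpace ℝ (Fin n)) :=
  Metric.sphere (0 : EuclideanSpace ℝ (Fin n)) 1

/-- The spherical Lebesgue (Hausdorff) measure on `S^{n-1}`, i.e. the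
`(n-1)`-dimensional Hausdorff measure restricted to the unit sphere. -/
def sphMeasure (n : ℕ) : Measure (EuclideanSpace ℝ (Fin n)) :=
  (μH[(n : ℝ) - 1] : Measure (EuclideanSpace ℝ (Fin n))).restrict (unitSphere n)

/-- `K` is a convex body in `ℝⁿ` with the origin in its interior
(`K ∈ 𝒦₀ⁿ`). -/
def IsConvexBody0 {n : ℕ} (K : Set (EuclideanSpace ℝ (Fin n))) : Prop :=
  IsCompact K ∧ Convex ℝ K ∧ (0 : EuclideanSpace ℝ (Fin n)) ∈ interior K

/-- The radial function `ρ_K(u) = max {r > 0 : r • u ∈ K}`. -/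
def radialFn {n : ℕ} (K : Set (EuclideanSpace ℝ (Fin n))) (u : EuclideanSpace ℝ (Fin n)) : ℝ :=
  sSup {r : ℝ | 0 < r ∧ r • u ∈ K}

/-- The support function `h_K(u) = max {x·u : x ∈ K}`. -/
def suppFn {n : ℕ} (K : Set (EuclideanSpace ℝ (Fin n))) (u : EuclideanSpace ℝ (Fin n)) : ℝ :=
  sSup ((fun x => ⟪x, u⟫) '' K)

/-- The reverse radial Gauss image `α*_K(η)`: unit vectors `x/‖x‖` over boundary
points `x ∈ ∂K` lying on a supporting hyperplane of `K` with outer normal in `η`. -/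
def revGauss {n : ℕ} (K η : Set (EuclideanSpace ℝ (Fin n))) :
    Set (EuclideanSpace ℝ (Fin n)) :=
  {v | ∃ x ∈ frontier K, (∃ u ∈ η, ⟪x, u⟫ = suppFn K u) ∧ v = ‖x‖⁻¹ • x}

/-- The dual Orlicz curvature `C̃_φ(K,η) = (1/n) ∫_{α*_K(η)} φ(ρ_K(u)) du`,
as a set function. -/
def dualCurv {n : ℕ} (φ : ℝ → ℝ) (K η : Set (EuclideanSpace ℝ (Fin n))) : ℝ :=
  (n : ℝ)⁻¹ * ∫ u in revGauss K η, φ (radialFn K u) ∂(sphMeasure n)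

/-- The dual Orlicz quermassintegral `Ṽ_ϕ(K) = (1/n) ∫_{S^{n-1}} ϕ(ρ_K(u)) du`. -/
def dualQuerm {n : ℕ} (ϕ : ℝ → ℝ) (K : Set (EuclideanSpace ℝ (Fin n))) : ℝ :=
  (n : ℝ)⁻¹ * ∫ u, ϕ (radialFn K u) ∂(sphMeasure n)

/-- `μ` is not concentrated in any closed hemisphere. -/
def NotConcentrated {n : ℕ} (μ : Measure (EuclideanSpace ℝ (Fin n))) : Prop :=
  ∀ ξ ∈ unitSphere n, 0 < ∫ θ, max ⟪ξ, θ⟫ 0 ∂μ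

/-- Conditions A1)–A3): `ϕ : (0,∞) → (0,∞)` is strictly decreasing with
`ϕ(0⁺) = ∞`, `ϕ(∞) = 0`, differentiable with `ϕ' < 0`, and
`φ(t) = -ϕ'(t)·t` is (positive and) continuous on `(0,∞)`. -/
def CondA (ϕ φ : ℝ → ℝ) : Prop :=
  StrictAntiOn ϕ (Set.Ioi 0) ∧ (∀ t > (0 : ℝ), 0 < ϕ t) ∧
    Tendsto ϕ (𝓝[>] (0 : ℝ)) atTop ∧ Tendsto ϕ atTop (𝓝 (0 : ℝ)) ∧
    (∀ t > (0 : ℝ), HasDerivAt ϕ (-(φ t) / t) t) ∧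
    (∀ t > (0 : ℝ), 0 < φ t) ∧ ContinuousOn φ (Set.Ioi 0)

/-- Conditions B1)–B3): `ϕ : (0,∞) → (0,∞)` is strictly increasing with
`ϕ(0⁺) = 0`, `ϕ(∞) = ∞`, differentiable with `ϕ' > 0`, and
`φ(t) = ϕ'(t)·t` is (positive and) continuous on `(0,∞)`. -/
def CondB (ϕ φ : ℝ → ℝ) : Prop :=
  StrictMonoOn ϕ (Set.Ioi 0) ∧ (∀ t > (0 : ℝ), 0 < ϕ t) ∧
    Tendsto ϕ (𝓝[>] (0 : ℝ)) (𝓝 (0 : ℝ)) ∧ Tendsto ϕ atTop atTop ∧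
    (∀ t > (0 : ℝ), HasDerivAt ϕ (φ t / t) t) ∧
    (∀ t > (0 : ℝ), 0 < φ t) ∧ ContinuousOn φ (Set.Ioi 0)

/-- The Wulff shape `[f] = ⋂_{u ∈ Ω} {x : x·u ≤ f(u)}`. -/
def wulff {n : ℕ} (Ω : Set (EuclideanSpace ℝ (Fin n))) (f : EuclideanSpace ℝ (Fin n) → ℝ) :
    Set (EuclideanSpace ℝ (Fin n)) :=
  ⋂ u ∈ Ω, {x | ⟪x, u⟫ ≤ f u}

/-- The convex hull `⟨ρ⟩ = conv {ρ(u) u : u ∈ Ω}`. -/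
def sphHull {n : ℕ} (Ω : Set (EuclideanSpace ℝ (Fin n))) (ρ : EuclideanSpace ℝ (Fin n) → ℝ) :
    Set (EuclideanSpace ℝ (Fin n)) :=
  convexHull ℝ ((fun u => ρ u • u) '' Ω)

/-- The set `∂′K` of boundary points of `K` having a unique outer unit normal. -/
def uniqNormalPts {n : ℕ} (K : Set (EuclideanSpace ℝ (Fin n))) :
    Set (EuclideanSpace ℝ (Fin n)) :=
  {x | x ∈ frontier K ∧ ∃! v, v ∈ unitSphere n ∧ ⟪x, v⟫ = suppFn K v}

/-- The polar body `K* = {x : x·y ≤ 1 for all y ∈ K}`. -/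
def polarBody {n : ℕ} (K : Set (EuclideanSpace ℝ (Fin n))) :
    Set (EuclideanSpace ℝ (Fin n)) :=
  {x | ∀ y ∈ K, ⟪x, y⟫ ≤ 1}

/-- `Ω` is a closed subset of `S^{n-1}` not contained in any closed hemisphere. -/
def GoodOmega {n : ℕ} (Ω : Set (EuclideanSpace ℝ (Fin n))) : Prop :=
  Ω ⊆ unitSphere n ∧ IsClosed Ω ∧ ∀ ξ ∈ unitSphere n, ∃ u ∈ Ω, ⟪ξ, u⟫ < 0

/-! For `h ≥ δ > 0` on the sphere, the radial function of `[h]` is the reciprocal of its gauge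
`F_h(u) = sup_v max(u·v, 0) / h(v)`. The gauge is Lipschitz in `u` and depends
Lipschitz-continuously on `h` in the sup norm, so the radial functions of `[h_i]` are continuous,
lie eventually in a fixed compact subinterval of `(0, ∞)` and converge pointwise to that of `[h]`;
dominated convergence concludes. -/

lemma abs_csSup_image_sub_csSup_image_le {α : Type*} {A : Set α} (hA : A.Nonempty)
    {f g : α → ℝ} {c : ℝ} (hf : BddAbove (f '' A)) (hg : BddAbove (g '' A))
    (hfg : ∀ v ∈ A, |f v - g v| ≤ c) :
    |sSup (f '' A) - sSup (g '' A)| ≤ c := by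
  have key : ∀ f g : α → ℝ, BddAbove (g '' A) → (∀ v ∈ A, f v ≤ g v + c) →
      sSup (f '' A) ≤ sSup (g '' A) + c := fun f g hg hle =>
    csSup_le (hA.image f) <| forall_mem_image.2 fun v hv =>
      (hle v hv).trans (add_le_add_left (le_csSup hg (mem_image_of_mem g hv)) c)
  rw [abs_sub_le_iff]
  exact ⟨sub_le_iff_le_add'.2 <| key f g hg fun v hv => by linarith [(abs_le.1 (hfg v hv)).2],
    sub_le_iff_le_add'.2 <| key g f hf fun v hv => by linarith [(abs_le.1 (hfg v hv)).1]⟩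

lemma IsCompact.exists_pos_forall_le {X : Type*} [TopologicalSpace X] {K : Set X}
    (hK : IsCompact K) {f : X → ℝ} (hf : ContinuousOn f K) (hpos : ∀ x ∈ K, 0 < f x) :
    ∃ c > 0, ∀ x ∈ K, c ≤ f x := by
  rcases K.eq_empty_or_nonempty with rfl | hne
  · exact ⟨1, one_pos, fun x hx => hx.elim⟩
  · obtain ⟨x₀, hx₀, hmin⟩ := hK.exists_isMinOn hne hf
    exact ⟨f x₀, hpos x₀ hx₀, fun x hx => hmin hx⟩

lemma TendstoUniformlyOn.eventually_abs_sub_lt {ι α : Type*} {l : Filter ι} {F : ι → α → ℝ}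
    {f : α → ℝ} {s : Set α} (hF : TendstoUniformlyOn F f l s) {ε : ℝ} (hε : 0 < ε) :
    ∀ᶠ i in l, ∀ x ∈ s, |F i x - f x| < ε := by
  filter_upwards [Metric.tendstoUniformlyOn_iff.1 hF ε hε] with i hi x hx
  rw [← Real.dist_eq, dist_comm]
  exact hi x hx

section Integrals

variable {X : Type*} [MeasurableSpace X] {μ : Measure X}

lemma integral_eq_zero_of_measure_univ_eq_top (hμ : μ univ = ∞) {f : X → ℝ} {c : ℝ}
    (hc : 0 < c) (hf : ∀ᵐ x ∂μ, c ≤ f x) : ∫ x, f x ∂μ = 0 := by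
  refine integral_undef fun hint => (hint.measure_norm_ge_lt_top hc).ne ?_
  refine top_unique (hμ ▸ measure_mono_ae ?_)
  filter_upwards [hf] with x hx _
  exact hx.trans (le_abs_self _)

/-- In the infinite-measure case both sides are the junk value `0`. -/
lemma tendsto_setIntegral_comp_of_mapsTo_Icc [TopologicalSpace X] [OpensMeasurableSpace X]
    {S : Set X} (hS : MeasurableSet S) {ϕ : ℝ → ℝ} {a b : ℝ}
    (hϕc : ContinuousOn ϕ (Icc a b)) (hϕp : ∀ t ∈ Icc a b, 0 < ϕ t)
    {ι : Type*} {l : Filter ι} [l.IsCountablyGenerated] [l.NeBot] {ρ : ι → X → ℝ} {ρ₀ : X → ℝ}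
    (hρc : ∀ᶠ i in l, ContinuousOn (ρ i) S) (hρ : ∀ᶠ i in l, MapsTo (ρ i) S (Icc a b))
    (hlim : ∀ x ∈ S, Tendsto (fun i => ρ i x) l (𝓝 (ρ₀ x))) :
    Tendsto (fun i => ∫ x in S, ϕ (ρ i x) ∂μ) l (𝓝 (∫ x in S, ϕ (ρ₀ x) ∂μ)) := by
  have hρ₀ : MapsTo ρ₀ S (Icc a b) := fun x hx =>
    isClosed_Icc.mem_of_tendsto (hlim x hx) (hρ.mono fun i hi => hi hx)
  obtain ⟨c, hc, hcϕ⟩ := isCompact_Icc.exists_pos_forall_le hϕc hϕp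
  by_cases hμS : μ S = ∞
  · have hzero : ∀ {g : X → ℝ}, MapsTo g S (Icc a b) → ∫ x in S, ϕ (g x) ∂μ = 0 :=
      fun hg => integral_eq_zero_of_measure_univ_eq_top (by rwa [Measure.restrict_apply_univ])
        hc (ae_restrict_of_forall_mem hS fun x hx => hcϕ _ (hg hx))
    rw [hzero hρ₀]
    exact tendsto_const_nhds.congr' (hρ.mono fun i hi => (hzero hi).symm)
  have : IsFiniteMeasure (μ.restrict S) := ⟨by rwa [Measure.restrict_apply_univ, lt_top_iff_ne_top]⟩
  obtain ⟨C, hC⟩ := isCompact_Icc.exists_bound_of_continuousOn hϕc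
  refine tendsto_integral_filter_of_dominated_convergence (fun _ => C) ?_ ?_
    (integrable_const C) (ae_restrict_of_forall_mem hS fun x hx => ?_)
  · filter_upwards [hρc, hρ] with i hic hi
    exact (hϕc.comp hic hi).aestronglyMeasurable hS
  · filter_upwards [hρ] with i hi
    exact ae_restrict_of_forall_mem hS fun x hx => hC _ (hi hx)
  · exact (hϕc _ (hρ₀ hx)).tendsto.comp
      (tendsto_nhdsWithin_iff.2 ⟨hlim x hx, hρ.mono fun i hi => hi hx⟩)

end Integrals

section WulffGauge

variable {n : ℕ} {h h₁ h₂ : EuclideanSpace ℝ (Fin n) → ℝ} {u u' : EuclideanSpace ℝ (Fin n)}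
  {δ : ℝ}

def wulffGauge (h : EuclideanSpace ℝ (Fin n) → ℝ) (u : EuclideanSpace ℝ (Fin n)) : ℝ :=
  sSup ((fun v => max ⟪u, v⟫ 0 / h v) '' unitSphere n)

lemma max_inner_zero_le_one (hu : u ∈ unitSphere n) {v : EuclideanSpace ℝ (Fin n)}
    (hv : v ∈ unitSphere n) : max ⟪u, v⟫ 0 ≤ 1 := by
  refine max_le ((real_inner_le_norm u v).trans ?_) zero_le_one
  rw [mem_sphere_zero_iff_norm.1 hu, mem_sphere_zero_iff_norm.1 hv, mul_one]

lemma max_inner_zero_div_le_inv (hδ : 0 < δ) (hh : ∀ v ∈ unitSphere n, δ ≤ h v)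
    (hu : u ∈ unitSphere n) {v : EuclideanSpace ℝ (Fin n)} (hv : v ∈ unitSphere n) :
    max ⟪u, v⟫ 0 / h v ≤ δ⁻¹ := by
  simpa only [one_div] using div_le_div₀ zero_le_one (max_inner_zero_le_one hu hv) hδ (hh v hv)

lemma bddAbove_wulffGauge_image (hδ : 0 < δ) (hh : ∀ v ∈ unitSphere n, δ ≤ h v)
    (hu : u ∈ unitSphere n) :
    BddAbove ((fun v => max ⟪u, v⟫ 0 / h v) '' unitSphere n) :=
  ⟨δ⁻¹, forall_mem_image.2 fun _ hv => max_inner_zero_div_le_inv hδ hh hu hv⟩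

lemma wulffGauge_le_inv (hδ : 0 < δ) (hh : ∀ v ∈ unitSphere n, δ ≤ h v)
    (hu : u ∈ unitSphere n) : wulffGauge h u ≤ δ⁻¹ :=
  csSup_le (nonempty_of_mem hu |>.image _) <|
    forall_mem_image.2 fun _ hv => max_inner_zero_div_le_inv hδ hh hu hv

lemma inv_le_wulffGauge (hδ : 0 < δ) (hh : ∀ v ∈ unitSphere n, δ ≤ h v)
    (hu : u ∈ unitSphere n) : (h u)⁻¹ ≤ wulffGauge h u := by
  have hself : max ⟪u, u⟫ 0 = 1 := by
    rw [real_inner_self_eq_norm_sq, mem_sphere_zero_iff_norm.1 hu, one_pow, max_eq_left zero_le_one]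
  simpa only [wulffGauge, hself, one_div] using
    le_csSup (bddAbove_wulffGauge_image hδ hh hu) (mem_image_of_mem _ hu)

lemma wulffGauge_pos (hδ : 0 < δ) (hh : ∀ v ∈ unitSphere n, δ ≤ h v) (hu : u ∈ unitSphere n) :
    0 < wulffGauge h u :=
  (inv_pos.2 (hδ.trans_le (hh u hu))).trans_le (inv_le_wulffGauge hδ hh hu)

lemma smul_mem_wulff_iff_wulffGauge_le (hδ : 0 < δ) (hh : ∀ v ∈ unitSphere n, δ ≤ h v)
    (hu : u ∈ unitSphere n) {r : ℝ} (hr : 0 < r) :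
    r • u ∈ wulff (unitSphere n) h ↔ wulffGauge h u ≤ r⁻¹ := by
  have hpointwise : ∀ v ∈ unitSphere n, r * ⟪u, v⟫ ≤ h v ↔ max ⟪u, v⟫ 0 / h v ≤ r⁻¹ := by
    intro v hv
    have hv₀ := hδ.trans_le (hh v hv)
    rw [div_le_iff₀ hv₀, max_le_iff, ← le_inv_mul_iff₀ hr, iff_self_and]
    exact fun _ => by positivity
  simp only [wulff, mem_iInter, mem_ofPred_eq, real_inner_smul_left]
  rw [wulffGauge, csSup_le_iff (bddAbove_wulffGauge_image hδ hh hu) (nonempty_of_mem hu |>.image _),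
    forall_mem_image]
  exact forall₂_congr hpointwise

lemma radialFn_wulff (hδ : 0 < δ) (hh : ∀ v ∈ unitSphere n, δ ≤ h v) (hu : u ∈ unitSphere n) :
    radialFn (wulff (unitSphere n) h) u = (wulffGauge h u)⁻¹ := by
  have hpos := wulffGauge_pos hδ hh hu
  have hset : {r : ℝ | 0 < r ∧ r • u ∈ wulff (unitSphere n) h} = Ioc 0 (wulffGauge h u)⁻¹ := by
    ext r
    simp only [mem_ofPred_eq, mem_Ioc, and_congr_right_iff]
    intro hr
    rw [smul_mem_wulff_iff_wulffGauge_le hδ hh hu hr, le_inv_comm₀ hpos hr]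
  rw [radialFn, hset, csSup_Ioc (inv_pos.2 hpos)]

lemma radialFn_wulff_mem_Icc (hδ : 0 < δ) (hh : ∀ v ∈ unitSphere n, δ ≤ h v)
    (hu : u ∈ unitSphere n) : radialFn (wulff (unitSphere n) h) u ∈ Icc δ (h u) := by
  rw [radialFn_wulff hδ hh hu]
  have hpos := wulffGauge_pos hδ hh hu
  exact ⟨le_inv_of_le_inv₀ hpos (wulffGauge_le_inv hδ hh hu),
    inv_le_of_inv_le₀ (hδ.trans_le (hh u hu)) (inv_le_wulffGauge hδ hh hu)⟩

lemma abs_wulffGauge_sub_wulffGauge_le (hδ : 0 < δ) (hh : ∀ v ∈ unitSphere n, δ ≤ h v)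
    (hu : u ∈ unitSphere n) (hu' : u' ∈ unitSphere n) :
    |wulffGauge h u - wulffGauge h u'| ≤ ‖u - u'‖ / δ := by
  refine abs_csSup_image_sub_csSup_image_le (nonempty_of_mem hu)
    (bddAbove_wulffGauge_image hδ hh hu) (bddAbove_wulffGauge_image hδ hh hu') fun v hv => ?_
  have hv₀ := hδ.trans_le (hh v hv)
  rw [← sub_div, abs_div, abs_of_pos hv₀]
  refine div_le_div₀ (norm_nonneg _) ?_ hδ (hh v hv)
  calc |max ⟪u, v⟫ 0 - max ⟪u', v⟫ 0| ≤ |⟪u - u', v⟫| := by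
        rw [inner_sub_left]; exact abs_max_sub_max_le_abs _ _ _
    _ ≤ ‖u - u'‖ * ‖v‖ := abs_real_inner_le_norm _ _
    _ = ‖u - u'‖ := by rw [mem_sphere_zero_iff_norm.1 hv, mul_one]

lemma abs_wulffGauge_sub_le (hδ : 0 < δ) (hh₁ : ∀ v ∈ unitSphere n, δ ≤ h₁ v)
    (hh₂ : ∀ v ∈ unitSphere n, δ ≤ h₂ v) {ε : ℝ} (hε : ∀ v ∈ unitSphere n, |h₁ v - h₂ v| ≤ ε)
    (hu : u ∈ unitSphere n) :
    |wulffGauge h₁ u - wulffGauge h₂ u| ≤ ε / δ ^ 2 := by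
  refine abs_csSup_image_sub_csSup_image_le (nonempty_of_mem hu)
    (bddAbove_wulffGauge_image hδ hh₁ hu) (bddAbove_wulffGauge_image hδ hh₂ hu) fun v hv => ?_
  have h₁₀ := hδ.trans_le (hh₁ v hv)
  have h₂₀ := hδ.trans_le (hh₂ v hv)
  have hm := max_inner_zero_le_one hu hv
  rw [div_sub_div _ _ h₁₀.ne' h₂₀.ne', mul_comm (h₁ v), ← mul_sub, abs_div, abs_mul,
    abs_of_nonneg (le_max_right _ _), abs_of_pos (mul_pos h₁₀ h₂₀), abs_sub_comm, sq]
  gcongr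
  · exact (abs_nonneg _).trans (hε v hv)
  · exact (mul_le_of_le_one_left (abs_nonneg _) hm).trans (hε v hv)
  · exact hh₁ v hv
  · exact hh₂ v hv

lemma continuousOn_radialFn_wulff (hδ : 0 < δ) (hh : ∀ v ∈ unitSphere n, δ ≤ h v) :
    ContinuousOn (radialFn (wulff (unitSphere n) h)) (unitSphere n) := by
  have hLip : LipschitzOnWith (Real.toNNReal δ⁻¹) (wulffGauge h) (unitSphere n) :=
    LipschitzOnWith.of_dist_le_mul fun u hu u' hu' => by
      rw [Real.dist_eq, dist_eq_norm, Real.coe_toNNReal _ (inv_nonneg.2 hδ.le), inv_mul_eq_div]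
      exact abs_wulffGauge_sub_wulffGauge_le hδ hh hu hu'
  exact (hLip.continuousOn.inv₀ fun u hu => (wulffGauge_pos hδ hh hu).ne').congr
    fun u hu => radialFn_wulff hδ hh hu

lemma tendsto_radialFn_wulff {ι : Type*} {l : Filter ι} {h : ι → EuclideanSpace ℝ (Fin n) → ℝ}
    {h₀ : EuclideanSpace ℝ (Fin n) → ℝ} (hlim : TendstoUniformlyOn h h₀ l (unitSphere n))
    (hδ : 0 < δ) (hh₀ : ∀ v ∈ unitSphere n, δ ≤ h₀ v) (hu : u ∈ unitSphere n) :
    Tendsto (fun i => radialFn (wulff (unitSphere n) (h i)) u) l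
      (𝓝 (radialFn (wulff (unitSphere n) h₀) u)) := by
  have hlower : ∀ᶠ i in l, ∀ v ∈ unitSphere n, δ / 2 ≤ h i v := by
    filter_upwards [hlim.eventually_abs_sub_lt (half_pos hδ)] with i hi v hv
    linarith [hh₀ v hv, (abs_lt.1 (hi v hv)).1]
  have hgauge : Tendsto (fun i => wulffGauge (h i) u) l (𝓝 (wulffGauge h₀ u)) := by
    refine Metric.tendsto_nhds.2 fun ε hε => ?_
    filter_upwards [hlower, hlim.eventually_abs_sub_lt (by positivity : 0 < ε / 2 * (δ / 2) ^ 2)]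
      with i hi hclose
    rw [Real.dist_eq]
    calc |wulffGauge (h i) u - wulffGauge h₀ u| ≤ ε / 2 * (δ / 2) ^ 2 / (δ / 2) ^ 2 :=
          abs_wulffGauge_sub_le (half_pos hδ) hi (fun v hv => (half_le_self hδ.le).trans (hh₀ v hv))
            (fun v hv => (hclose v hv).le) hu
      _ < ε := by field_simp; linarith
  rw [radialFn_wulff hδ hh₀ hu]
  refine (hgauge.inv₀ (wulffGauge_pos hδ hh₀ hu).ne').congr' ?_
  filter_upwards [hlower] with i hi
  rw [radialFn_wulff (half_pos hδ) hi hu]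

end WulffGauge

theorem dualQuerm_wulff_continuous_general {n : ℕ} (ϕ : ℝ → ℝ)
    (hϕc : ContinuousOn ϕ (Set.Ioi 0)) (hϕp : ∀ t > (0 : ℝ), 0 < ϕ t)
    (h : ℕ → EuclideanSpace ℝ (Fin n) → ℝ) (h₀ : EuclideanSpace ℝ (Fin n) → ℝ)
    (hh₀c : ContinuousOn h₀ (unitSphere n))
    (hh₀p : ∀ v ∈ unitSphere n, 0 < h₀ v)
    (hu : ∀ ε > (0 : ℝ), ∃ N : ℕ, ∀ i ≥ N, ∀ v ∈ unitSphere n, |h i v - h₀ v| ≤ ε) :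
    Tendsto (fun i => dualQuerm ϕ (wulff (unitSphere n) (h i))) atTop
      (𝓝 (dualQuerm ϕ (wulff (unitSphere n) h₀))) := by
  have hS : IsCompact (unitSphere n) := isCompact_sphere 0 1
  have hunif : TendstoUniformlyOn h h₀ atTop (unitSphere n) :=
    Metric.tendstoUniformlyOn_iff.2 fun ε hε => by
      obtain ⟨N, hN⟩ := hu (ε / 2) (half_pos hε)
      filter_upwards [eventually_ge_atTop N] with i hi v hv
      rw [dist_comm, Real.dist_eq]
      exact (hN i hi v hv).trans_lt (half_lt_self hε)
  obtain ⟨δ, hδ, hδh₀⟩ := hS.exists_pos_forall_le hh₀c hh₀p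
  obtain ⟨M, hM⟩ := hS.bddAbove_image hh₀c
  have hclose : ∀ᶠ i in atTop, ∀ v ∈ unitSphere n, h i v ∈ Icc (δ / 2) (M + δ / 2) := by
    filter_upwards [hunif.eventually_abs_sub_lt (half_pos hδ)] with i hi v hv
    have := abs_lt.1 (hi v hv)
    constructor <;> linarith [hδh₀ v hv, hM (mem_image_of_mem h₀ hv)]
  refine Tendsto.const_mul _ <|
    tendsto_setIntegral_comp_of_mapsTo_Icc (b := M + δ / 2) hS.isClosed.measurableSet
    (hϕc.mono fun t ht => (half_pos hδ).trans_le ht.1)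
    (fun t ht => hϕp t ((half_pos hδ).trans_le ht.1)) ?_ ?_
    fun u hu => tendsto_radialFn_wulff hunif hδ hδh₀ hu
  · filter_upwards [hclose] with i hi
    exact continuousOn_radialFn_wulff (half_pos hδ) fun v hv => (hi v hv).1
  · filter_upwards [hclose] with i hi u hu
    have hρ := radialFn_wulff_mem_Icc (half_pos hδ) (fun v hv => (hi v hv).1) hu
    exact ⟨hρ.1, hρ.2.trans (hi u hu).2⟩

/-- **Continuity of `Ṽ_ϕ` through Wulff shapes** (consequence of Lemma 3.1 and
Aleksandrov's convergence theorem). If `ϕ : (0,∞) → (0,∞)` is continuous and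
`h_i → h` uniformly on `S^{n-1}` with `h_i, h` continuous and positive, then
`Ṽ_ϕ([h_i]) → Ṽ_ϕ([h])`. -/
theorem dualQuerm_wulff_continuous {n : ℕ} (hn : 0 < n) (ϕ : ℝ → ℝ)
    (hϕc : ContinuousOn ϕ (Set.Ioi 0)) (hϕp : ∀ t > (0 : ℝ), 0 < ϕ t)
    (h : ℕ → EuclideanSpace ℝ (Fin n) → ℝ) (h₀ : EuclideanSpace ℝ (Fin n) → ℝ)
    (hhc : ∀ i, ContinuousOn (h i) (unitSphere n))
    (hhp : ∀ i, ∀ v ∈ unitSphere n, 0 < h i v)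
    (hh₀c : ContinuousOn h₀ (unitSphere n))
    (hh₀p : ∀ v ∈ unitSphere n, 0 < h₀ v)
    (hu : ∀ ε > (0 : ℝ), ∃ N : ℕ, ∀ i ≥ N, ∀ v ∈ unitSphere n, |h i v - h₀ v| ≤ ε) :
    Tendsto (fun i => dualQuerm ϕ (wulff (unitSphere n) (h i))) atTop
      (𝓝 (dualQuerm ϕ (wulff (unitSphere n) h₀))) :=
  dualQuerm_wulff_continuous_general ϕ hϕc hϕp h h₀ hh₀c hh₀p hu
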